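/- Let d be a positive integer, L > 0, let U ⊆ ℝ^d be a measurable set with 0 < vol(U) < ∞, let f* : ℝ^d → [-1,1] be L-Lipschitz with respect to the Euclidean norm, and let h : ℝ^d → ℝ be measurable with |h(x)| ≤ 1 for all x, with h(x) = 0 and f*(x) = 0 for all x ∉ U. Then for every σ > 0 the Gaussian smoothing h̃ simultaneously satisfies: (1) robustness: |h̃(x) − h̃(y)| ≤ (e√2/σ) ‖x − y‖_2 for all x, y ∈ ℝ^d; and (2) small error: ℓ_1(h̃, f*) ≤ ℓ_1(h, f*) + 2Lσ√d. -/

import Mathlib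

/-!
Robustness. Since `h̃ x = ∫ h u φ(u - x) du`, the difference `h̃ x - h̃ y` is bounded by
`sup |h|` times the `L¹` distance between two translates of the Gaussian density. A reflection
moves the translation vector onto a coordinate axis without changing the density, which then
factors, so the question is one-dimensional: for the density `g` of `N(0, σ²)` and `c ≥ 0`,
`∫ |g s - g (s - c)| ds = 2 ∫_{-c/2}^{c/2} g ≤ 2c · g 0 ≤ c / σ`, already better than `e√2/σ`.

Small error. Pointwise `|h̃ - f*| ≤ (|h - f*|)~ + |f̃* - f*|`. Smoothing does not increase the
`L¹` norm (Tonelli and translation invariance of Lebesgue measure), and `h - f*` vanishes off `U`,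
so the first term integrates over `U` to at most `∫_U |h - f*|`. Since `f*` is `L`-Lipschitz the
second is at most `L · E‖t‖ ≤ L √(E‖t‖²) = L σ √d`.
-/

open MeasureTheory

/-- Density of the centered Gaussian on `ℝ^d` with covariance `σ² I_d`. -/
noncomputable def gaussDensity (d : ℕ) (σ : ℝ) (t : EuclideanSpace ℝ (Fin d)) : ℝ :=
  (2 * Real.pi * σ ^ 2) ^ (-(d : ℝ) / 2) * Real.exp (-‖t‖ ^ 2 / (2 * σ ^ 2))

/-- Gaussian smoothing `h̃(x) = ∫ h(x+t) φ_σ(t) dt`. -/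
noncomputable def gaussSmooth (d : ℕ) (σ : ℝ)
    (h : EuclideanSpace ℝ (Fin d) → ℝ) (x : EuclideanSpace ℝ (Fin d)) : ℝ :=
  ∫ t : EuclideanSpace ℝ (Fin d), h (x + t) * gaussDensity d σ t

/-- `ℓ₁` distance between two functions relative to the uniform distribution on `U`. -/
noncomputable def l1Dist (d : ℕ) (U : Set (EuclideanSpace ℝ (Fin d)))
    (f g : EuclideanSpace ℝ (Fin d) → ℝ) : ℝ :=
  (1 / (volume U).toReal) * ∫ x in U, |f x - g x|

open Real Set ProbabilityTheory

section OneDimensional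

variable {σ : ℝ}

lemma integral_sq_mul_gaussianPDFReal (hσ : σ ≠ 0) :
    ∫ s, s ^ 2 * gaussianPDFReal 0 (σ ^ 2).toNNReal s = σ ^ 2 := by
  have hv : (σ ^ 2).toNNReal ≠ 0 := by simpa using hσ
  have hvar := variance_eq_integral (X := id) (μ := gaussianReal 0 (σ ^ 2).toNNReal) aemeasurable_id
  rw [variance_id_gaussianReal, integral_gaussianReal_eq_integral_smul hv] at hvar
  simp only [id, integral_id_gaussianReal, sub_zero, smul_eq_mul] at hvar
  calc ∫ s, s ^ 2 * gaussianPDFReal 0 (σ ^ 2).toNNReal s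
      = ∫ s, gaussianPDFReal 0 (σ ^ 2).toNNReal s * s ^ 2 := by simp_rw [mul_comm]
    _ = σ ^ 2 := hvar.symm.trans (Real.coe_toNNReal _ (sq_nonneg σ))

lemma integral_gaussianPDFReal_sq_eq_one (hσ : σ ≠ 0) :
    ∫ s, gaussianPDFReal 0 (σ ^ 2).toNNReal s = 1 :=
  integral_gaussianPDFReal_eq_one 0 (by simpa using hσ)

lemma gaussianPDFReal_le_of_sq_le {v : NNReal} {s t : ℝ} (hst : s ^ 2 ≤ t ^ 2) :
    gaussianPDFReal 0 v t ≤ gaussianPDFReal 0 v s := by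
  simp only [gaussianPDFReal, sub_zero]
  gcongr

lemma gaussianPDFReal_le_inv_two_mul (hσ : 0 < σ) (s : ℝ) :
    gaussianPDFReal 0 (σ ^ 2).toNNReal s ≤ (2 * σ)⁻¹ := by
  have hexp : rexp (-(s - 0) ^ 2 / (2 * (σ ^ 2).toNNReal)) ≤ 1 := by
    rw [exp_le_one_iff]; exact div_nonpos_of_nonpos_of_nonneg (by nlinarith) (by positivity)
  have hsqrt : 2 * σ ≤ √(2 * π * (σ ^ 2).toNNReal) := by
    rw [Real.coe_toNNReal _ (sq_nonneg σ)]
    exact Real.le_sqrt_of_sq_le (by nlinarith [pi_gt_three])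
  calc gaussianPDFReal 0 (σ ^ 2).toNNReal s ≤ (√(2 * π * (σ ^ 2).toNNReal))⁻¹ :=
        mul_le_of_le_one_right (by positivity) hexp
    _ ≤ (2 * σ)⁻¹ := inv_anti₀ (by positivity) hsqrt

lemma setIntegral_Iic_comp_sub {E : Type*} [NormedAddCommGroup E] [NormedSpace ℝ E]
    (F : ℝ → E) (b c : ℝ) : ∫ s in Iic b, F (s - c) = ∫ s in Iic (b - c), F s := by
  have := (measurePreserving_sub_right volume c).setIntegral_preimage_emb
    (measurableEmbedding_subRight c) F (Iic (b - c))
  rwa [preimage_sub_const_Iic, sub_add_cancel] at this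

lemma integral_abs_gaussianPDFReal_sub_le (hσ : 0 < σ) {c : ℝ} (hc : 0 ≤ c) :
    ∫ s, |gaussianPDFReal 0 (σ ^ 2).toNNReal s - gaussianPDFReal 0 (σ ^ 2).toNNReal (s - c)|
      ≤ c / σ := by
  set g := gaussianPDFReal 0 (σ ^ 2).toNNReal
  set F : ℝ → ℝ := fun s => g s - g (s - c)
  have hg : Integrable g := integrable_gaussianPDFReal 0 _
  have hF : Integrable F := hg.sub (hg.comp_sub_right c)
  have hF_zero : ∫ s, F s = 0 := by
    rw [integral_sub hg (hg.comp_sub_right c), integral_sub_right_eq_self, sub_self]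
  -- `F ≥ 0` exactly to the left of the midpoint `c / 2`
  have hmax : ∀ s, max (F s) 0 = (Iic (c / 2)).indicator F s := by
    intro s
    by_cases hs : s ≤ c / 2
    · rw [indicator_of_mem (mem_Iic.2 hs), max_eq_left]
      exact sub_nonneg.2 (gaussianPDFReal_le_of_sq_le (by nlinarith))
    · rw [indicator_of_notMem (mt mem_Iic.1 hs), max_eq_right]
      exact sub_nonpos.2 (gaussianPDFReal_le_of_sq_le (by nlinarith))
  have hpos : ∫ s, max (F s) 0 ≤ c * (2 * σ)⁻¹ := by
    rw [integral_congr_ae (ae_of_all _ hmax), integral_indicator measurableSet_Iic,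
      integral_sub hg.integrableOn (hg.comp_sub_right c).integrableOn,
      setIntegral_Iic_comp_sub,
      intervalIntegral.integral_Iic_sub_Iic hg.integrableOn hg.integrableOn]
    refine (le_abs_self _).trans ?_
    have := intervalIntegral.norm_integral_le_of_norm_le_const (a := c / 2 - c) (b := c / 2)
      (f := g) (C := (2 * σ)⁻¹) fun s _ => by
        rw [norm_of_nonneg (gaussianPDFReal_nonneg _ _ _)]
        exact gaussianPDFReal_le_inv_two_mul hσ s
    rw [Real.norm_eq_abs, sub_sub_cancel, abs_of_nonneg hc] at this
    linarith
  have habs : ∀ s, |F s| = 2 * max (F s) 0 - F s := fun s => by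
    rcases le_total 0 (F s) with h | h
    · rw [abs_of_nonneg h, max_eq_left h]; ring
    · rw [abs_of_nonpos h, max_eq_right h]; ring
  rw [integral_congr_ae (ae_of_all _ habs), integral_sub (hF.pos_part.const_mul 2) hF,
    integral_const_mul, hF_zero]
  have hcσ : c / σ = 2 * (c * (2 * σ)⁻¹) := by field_simp
  linarith

end OneDimensional

section Density

variable {d : ℕ} {σ : ℝ}

lemma gaussDensity_eq_prod (t : EuclideanSpace ℝ (Fin d)) :
    gaussDensity d σ t = ∏ i, gaussianPDFReal 0 (σ ^ 2).toNNReal (t i) := by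
  have hbase : 0 ≤ 2 * π * σ ^ 2 := by positivity
  simp only [gaussianPDFReal, Real.coe_toNNReal _ (sq_nonneg σ), sub_zero,
    Finset.prod_mul_distrib, Finset.prod_const, Finset.card_univ, Fintype.card_fin,
    ← Real.exp_sum]
  rw [gaussDensity, sqrt_eq_rpow, ← rpow_neg hbase, ← rpow_mul_natCast hbase,
    EuclideanSpace.norm_sq_eq, ← Finset.sum_div, ← Finset.sum_neg_distrib]
  simp only [Real.norm_eq_abs, sq_abs]
  ring_nf

lemma gaussDensity_nonneg (t : EuclideanSpace ℝ (Fin d)) : 0 ≤ gaussDensity d σ t := by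
  unfold gaussDensity; positivity

lemma continuous_gaussDensity : Continuous (gaussDensity d σ) := by
  unfold gaussDensity; fun_prop

lemma gaussDensity_comp_linearIsometryEquiv
    (R : EuclideanSpace ℝ (Fin d) ≃ₗᵢ[ℝ] EuclideanSpace ℝ (Fin d)) (t : EuclideanSpace ℝ (Fin d)) :
    gaussDensity d σ (R t) = gaussDensity d σ t := by
  simp only [gaussDensity, R.norm_map]

lemma integral_euclideanSpace_prod (F : Fin d → ℝ → ℝ) :
    ∫ t : EuclideanSpace ℝ (Fin d), ∏ i, F i (t i) = ∏ i, ∫ s, F i s :=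
  ((PiLp.volume_preserving_ofLp (Fin d)).integral_comp'
    (f := (MeasurableEquiv.toLp 2 (Fin d → ℝ)).symm) fun x => ∏ i, F i (x i)).trans
    (integral_fintype_prod_eq_prod F)

lemma integral_comp_coord_mul_prod_erase {g : ℝ → ℝ} (hg : ∫ s, g s = 1) (F : ℝ → ℝ) (i : Fin d) :
    ∫ t : EuclideanSpace ℝ (Fin d), F (t i) * ∏ j ∈ Finset.univ.erase i, g (t j) = ∫ s, F s := by
  have hupdate : ∀ x : Fin d → ℝ, F (x i) * ∏ j ∈ Finset.univ.erase i, g (x j)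
      = ∏ j, Function.update (fun _ => g) i F j (x j) := fun x => by
    rw [← Finset.mul_prod_erase _ _ (Finset.mem_univ i), Function.update_self]
    congr 1
    exact Finset.prod_congr rfl fun j hj => by
      rw [Function.update_of_ne (Finset.ne_of_mem_erase hj)]
  simp_rw [hupdate, integral_euclideanSpace_prod, ← Finset.mul_prod_erase _ _ (Finset.mem_univ i),
    Function.update_self]
  rw [Finset.prod_congr rfl fun j hj => by
      rw [Function.update_of_ne (Finset.ne_of_mem_erase hj), hg], Finset.prod_const_one, mul_one]

lemma gaussDensity_eq_mul_prod_erase (i : Fin d) (t : EuclideanSpace ℝ (Fin d)) :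
    gaussDensity d σ t = gaussianPDFReal 0 (σ ^ 2).toNNReal (t i) *
      ∏ j ∈ Finset.univ.erase i, gaussianPDFReal 0 (σ ^ 2).toNNReal (t j) := by
  rw [gaussDensity_eq_prod]
  exact (Finset.mul_prod_erase _ (fun j => gaussianPDFReal 0 _ (t j)) (Finset.mem_univ i)).symm

lemma integral_gaussDensity (hσ : σ ≠ 0) : ∫ t, gaussDensity d σ t = 1 := by
  simp_rw [gaussDensity_eq_prod, integral_euclideanSpace_prod,
    integral_gaussianPDFReal_sq_eq_one hσ,
    Finset.prod_const_one]

lemma integrable_gaussDensity (hσ : σ ≠ 0) : Integrable (gaussDensity d σ) :=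
  .of_integral_ne_zero (by rw [integral_gaussDensity hσ]; exact one_ne_zero)

lemma lintegral_enorm_gaussDensity (hσ : σ ≠ 0) : ∫⁻ t, ‖gaussDensity d σ t‖ₑ = 1 := by
  rw [← ofReal_integral_norm_eq_lintegral_enorm (integrable_gaussDensity hσ)]
  simp_rw [Real.norm_of_nonneg (gaussDensity_nonneg _)]
  rw [integral_gaussDensity hσ, ENNReal.ofReal_one]

lemma integral_sq_coord_mul_gaussDensity (hσ : σ ≠ 0) (i : Fin d) :
    ∫ t, t i ^ 2 * gaussDensity d σ t = σ ^ 2 := by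
  simp_rw [gaussDensity_eq_mul_prod_erase i, ← mul_assoc]
  rw [integral_comp_coord_mul_prod_erase (integral_gaussianPDFReal_sq_eq_one hσ)
    (fun s => s ^ 2 * gaussianPDFReal 0 (σ ^ 2).toNNReal s), integral_sq_mul_gaussianPDFReal hσ]

lemma integrable_norm_sq_mul_gaussDensity (hσ : σ ≠ 0) :
    Integrable fun t : EuclideanSpace ℝ (Fin d) => ‖t‖ ^ 2 * gaussDensity d σ t := by
  simp_rw [EuclideanSpace.norm_sq_eq, Real.norm_eq_abs, sq_abs, Finset.sum_mul]
  exact integrable_finsetSum _ fun i _ => .of_integral_ne_zero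
    (by rw [integral_sq_coord_mul_gaussDensity hσ]; positivity)

lemma integral_norm_sq_mul_gaussDensity (hσ : σ ≠ 0) :
    ∫ t : EuclideanSpace ℝ (Fin d), ‖t‖ ^ 2 * gaussDensity d σ t = d * σ ^ 2 := by
  simp_rw [EuclideanSpace.norm_sq_eq, Real.norm_eq_abs, sq_abs, Finset.sum_mul]
  rw [integral_finsetSum _ fun i _ => .of_integral_ne_zero
    (by rw [integral_sq_coord_mul_gaussDensity hσ]; positivity)]
  simp [integral_sq_coord_mul_gaussDensity hσ]

lemma norm_mul_gaussDensity_le {b : ℝ} (hb : 0 < b) (t : EuclideanSpace ℝ (Fin d)) :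
    ‖t‖ * gaussDensity d σ t
      ≤ b / 2 * gaussDensity d σ t + (2 * b)⁻¹ * (‖t‖ ^ 2 * gaussDensity d σ t) := by
  have hamgm : ‖t‖ ≤ b / 2 + (2 * b)⁻¹ * ‖t‖ ^ 2 := by
    have hsq : b / 2 + (2 * b)⁻¹ * ‖t‖ ^ 2 - ‖t‖ = (2 * b)⁻¹ * (‖t‖ - b) ^ 2 := by
      field_simp
      ring
    have hpos : 0 ≤ (2 * b)⁻¹ * (‖t‖ - b) ^ 2 := by positivity
    linarith
  exact (mul_le_mul_of_nonneg_right hamgm (gaussDensity_nonneg t)).trans_eq (by ring)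

lemma integrable_norm_mul_gaussDensity (hσ : σ ≠ 0) :
    Integrable fun t : EuclideanSpace ℝ (Fin d) => ‖t‖ * gaussDensity d σ t :=
  (((integrable_gaussDensity hσ).const_mul _).add
    ((integrable_norm_sq_mul_gaussDensity hσ).const_mul _)).mono'
    (continuous_norm.mul continuous_gaussDensity).aestronglyMeasurable
    (ae_of_all _ fun t => by
      rw [Real.norm_of_nonneg (mul_nonneg (norm_nonneg t) (gaussDensity_nonneg t))]
      exact norm_mul_gaussDensity_le one_pos t)

lemma integral_norm_mul_gaussDensity_le (hd : 0 < d) (hσ : 0 < σ) :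
    ∫ t : EuclideanSpace ℝ (Fin d), ‖t‖ * gaussDensity d σ t ≤ σ * √d := by
  set b := σ * √d
  have hb : 0 < b := by positivity
  have hint_φ := (integrable_gaussDensity (d := d) hσ.ne').const_mul (b / 2)
  have hint_sq := (integrable_norm_sq_mul_gaussDensity (d := d) hσ.ne').const_mul (2 * b)⁻¹
  calc ∫ t, ‖t‖ * gaussDensity d σ t
      ≤ ∫ t, (b / 2 * gaussDensity d σ t + (2 * b)⁻¹ * (‖t‖ ^ 2 * gaussDensity d σ t)) :=
        integral_mono_of_nonneg
          (ae_of_all _ fun t => mul_nonneg (norm_nonneg t) (gaussDensity_nonneg t))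
          (hint_φ.add hint_sq) (ae_of_all _ (norm_mul_gaussDensity_le hb))
    _ = b / 2 + (2 * b)⁻¹ * (d * σ ^ 2) := by
        rw [integral_add hint_φ hint_sq, integral_const_mul, integral_const_mul,
          integral_gaussDensity hσ.ne', integral_norm_sq_mul_gaussDensity hσ.ne', mul_one]
    _ = b := by
        have hb2 : b ^ 2 = d * σ ^ 2 := by rw [mul_pow, sq_sqrt (Nat.cast_nonneg d), mul_comm]
        field_simp
        linarith

lemma integral_abs_gaussDensity_sub_single (hσ : σ ≠ 0) (i : Fin d) (c : ℝ) :
    ∫ t, |gaussDensity d σ t - gaussDensity d σ (t - EuclideanSpace.single i c)|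
      = ∫ s, |gaussianPDFReal 0 (σ ^ 2).toNNReal s
          - gaussianPDFReal 0 (σ ^ 2).toNNReal (s - c)| := by
  have hfactor : ∀ t : EuclideanSpace ℝ (Fin d),
      |gaussDensity d σ t - gaussDensity d σ (t - EuclideanSpace.single i c)|
        = |gaussianPDFReal 0 (σ ^ 2).toNNReal (t i) - gaussianPDFReal 0 (σ ^ 2).toNNReal (t i - c)|
          * ∏ j ∈ Finset.univ.erase i, gaussianPDFReal 0 (σ ^ 2).toNNReal (t j) := fun t => by
    rw [gaussDensity_eq_mul_prod_erase i, gaussDensity_eq_mul_prod_erase i (t - _)]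
    have hprod : ∏ j ∈ Finset.univ.erase i, gaussianPDFReal 0 (σ ^ 2).toNNReal
          ((t - EuclideanSpace.single i c) j)
        = ∏ j ∈ Finset.univ.erase i, gaussianPDFReal 0 (σ ^ 2).toNNReal (t j) :=
      Finset.prod_congr rfl fun j hj => by simp [Finset.ne_of_mem_erase hj]
    have hi : (t - EuclideanSpace.single i c) i = t i - c := by simp
    rw [hprod, hi, ← sub_mul, abs_mul,
      abs_of_nonneg (Finset.prod_nonneg fun j _ => gaussianPDFReal_nonneg _ _ _)]
  simp_rw [hfactor]
  exact integral_comp_coord_mul_prod_erase (integral_gaussianPDFReal_sq_eq_one hσ)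
    (fun s => |gaussianPDFReal 0 (σ ^ 2).toNNReal s - gaussianPDFReal 0 (σ ^ 2).toNNReal (s - c)|) i

lemma integral_abs_gaussDensity_sub_eq_of_norm_eq {δ δ' : EuclideanSpace ℝ (Fin d)}
    (h : ‖δ‖ = ‖δ'‖) :
    ∫ t, |gaussDensity d σ t - gaussDensity d σ (t - δ)|
      = ∫ t, |gaussDensity d σ t - gaussDensity d σ (t - δ')| := by
  set R := Submodule.reflection (ℝ ∙ (δ' - δ))ᗮ
  have hR : R δ' = δ := Submodule.reflection_sub h.symm
  rw [← R.measurePreserving.integral_comp R.toHomeomorph.measurableEmbedding]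
  congr 1 with t
  rw [← hR, ← map_sub, gaussDensity_comp_linearIsometryEquiv, gaussDensity_comp_linearIsometryEquiv]

lemma integral_abs_gaussDensity_sub_le (hd : 0 < d) (hσ : 0 < σ) (δ : EuclideanSpace ℝ (Fin d)) :
    ∫ t, |gaussDensity d σ t - gaussDensity d σ (t - δ)| ≤ ‖δ‖ / σ := by
  rw [integral_abs_gaussDensity_sub_eq_of_norm_eq
      (δ' := EuclideanSpace.single ⟨0, hd⟩ ‖δ‖) (by simp),
    integral_abs_gaussDensity_sub_single hσ.ne']
  exact integral_abs_gaussianPDFReal_sub_le hσ (norm_nonneg δ)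

end Density

section Smoothing

variable {d : ℕ} {σ C : ℝ} {h f : EuclideanSpace ℝ (Fin d) → ℝ}

lemma integrable_comp_add_mul_gaussDensity (hσ : σ ≠ 0) (hm : Measurable h)
    (hb : ∀ z, |h z| ≤ C) (x : EuclideanSpace ℝ (Fin d)) :
    Integrable fun t => h (x + t) * gaussDensity d σ t :=
  (integrable_gaussDensity hσ).bdd_mul (hm.comp (measurable_const_add x)).aestronglyMeasurable
    (ae_of_all _ fun _ => (Real.norm_eq_abs _).trans_le (hb _))

lemma gaussSmooth_eq_integral_mul_sub (h : EuclideanSpace ℝ (Fin d) → ℝ)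
    (x : EuclideanSpace ℝ (Fin d)) :
    gaussSmooth d σ h x = ∫ u, h u * gaussDensity d σ (u - x) := by
  rw [gaussSmooth, ← integral_add_left_eq_self (fun u => h u * gaussDensity d σ (u - x)) x]
  simp only [add_sub_cancel_left]

lemma stronglyMeasurable_gaussSmooth (hm : Measurable h) :
    StronglyMeasurable (gaussSmooth d σ h) :=
  StronglyMeasurable.integral_prod_right'
    (f := fun p : EuclideanSpace ℝ (Fin d) × EuclideanSpace ℝ (Fin d) =>
      h (p.1 + p.2) * gaussDensity d σ p.2)
    ((hm.comp measurable_add).mul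
      (continuous_gaussDensity.measurable.comp measurable_snd)).stronglyMeasurable

lemma abs_gaussSmooth_le (hσ : σ ≠ 0) (hb : ∀ z, |h z| ≤ C) (x : EuclideanSpace ℝ (Fin d)) :
    |gaussSmooth d σ h x| ≤ C :=
  calc |gaussSmooth d σ h x| ≤ ∫ t, |h (x + t) * gaussDensity d σ t| := abs_integral_le_integral_abs
    _ ≤ ∫ t, C * gaussDensity d σ t :=
        integral_mono_of_nonneg (ae_of_all _ fun _ => abs_nonneg _)
          ((integrable_gaussDensity hσ).const_mul C) (ae_of_all _ fun t => by
            dsimp only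
            rw [abs_mul, abs_of_nonneg (gaussDensity_nonneg t)]
            exact mul_le_mul_of_nonneg_right (hb _) (gaussDensity_nonneg t))
    _ = C := by rw [integral_const_mul, integral_gaussDensity hσ, mul_one]

lemma abs_gaussSmooth_le_gaussSmooth_abs (x : EuclideanSpace ℝ (Fin d)) :
    |gaussSmooth d σ h x| ≤ gaussSmooth d σ (fun u => |h u|) x :=
  abs_integral_le_integral_abs.trans_eq <| by
    simp_rw [gaussSmooth, abs_mul, abs_of_nonneg (gaussDensity_nonneg _)]

lemma gaussSmooth_sub (hσ : σ ≠ 0) (hm : Measurable h) (hb : ∀ z, |h z| ≤ C)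
    (hfm : Measurable f) (hfb : ∀ z, |f z| ≤ C) (x : EuclideanSpace ℝ (Fin d)) :
    gaussSmooth d σ h x - gaussSmooth d σ f x = gaussSmooth d σ (fun u => h u - f u) x := by
  rw [gaussSmooth, gaussSmooth, gaussSmooth,
    ← integral_sub (integrable_comp_add_mul_gaussDensity hσ hm hb x)
      (integrable_comp_add_mul_gaussDensity hσ hfm hfb x)]
  simp_rw [sub_mul]

lemma abs_gaussSmooth_sub_le (hd : 0 < d) (hσ : 0 < σ) (hm : Measurable h) (hb : ∀ z, |h z| ≤ C)
    (x y : EuclideanSpace ℝ (Fin d)) :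
    |gaussSmooth d σ h x - gaussSmooth d σ h y| ≤ C / σ * ‖x - y‖ := by
  have hC : 0 ≤ C := (abs_nonneg _).trans (hb 0)
  have hφ := integrable_gaussDensity (d := d) hσ.ne'
  have hint : ∀ z, Integrable fun u => h u * gaussDensity d σ (u - z) := fun z =>
    (hφ.comp_sub_right z).bdd_mul hm.aestronglyMeasurable
      (ae_of_all _ fun u => (Real.norm_eq_abs _).trans_le (hb u))
  rw [gaussSmooth_eq_integral_mul_sub, gaussSmooth_eq_integral_mul_sub,
    ← integral_sub (hint x) (hint y)]
  calc |∫ u, (h u * gaussDensity d σ (u - x) - h u * gaussDensity d σ (u - y))|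
      ≤ ∫ u, |h u * gaussDensity d σ (u - x) - h u * gaussDensity d σ (u - y)| :=
        abs_integral_le_integral_abs
    _ ≤ ∫ u, C * |gaussDensity d σ (u - x) - gaussDensity d σ (u - y)| :=
        integral_mono_of_nonneg (ae_of_all _ fun _ => abs_nonneg _)
          (((hφ.comp_sub_right x).sub (hφ.comp_sub_right y)).abs.const_mul C)
          (ae_of_all _ fun u => by
            dsimp only
            rw [← mul_sub, abs_mul]
            exact mul_le_mul_of_nonneg_right (hb u) (abs_nonneg _))
    _ = C * ∫ t, |gaussDensity d σ t - gaussDensity d σ (t - (y - x))| := by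
        rw [integral_const_mul, ← integral_sub_right_eq_self
          (fun t => |gaussDensity d σ t - gaussDensity d σ (t - (y - x))|) x]
        simp only [sub_sub_sub_cancel_right]
    _ ≤ C * (‖y - x‖ / σ) := by gcongr; exact integral_abs_gaussDensity_sub_le hd hσ _
    _ = C / σ * ‖x - y‖ := by rw [norm_sub_rev]; ring

lemma abs_gaussSmooth_sub_self_le (hd : 0 < d) (hσ : 0 < σ) {K : NNReal} (hf : LipschitzWith K f)
    (hfb : ∀ z, |f z| ≤ C) (x : EuclideanSpace ℝ (Fin d)) :
    |gaussSmooth d σ f x - f x| ≤ K * (σ * √d) := by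
  have hφ := integrable_gaussDensity (d := d) hσ.ne'
  have hcentre : gaussSmooth d σ f x - f x = ∫ t, (f (x + t) - f x) * gaussDensity d σ t := by
    simp_rw [sub_mul]
    rw [integral_sub (integrable_comp_add_mul_gaussDensity hσ.ne' hf.continuous.measurable hfb x)
      (hφ.const_mul (f x)), integral_const_mul, integral_gaussDensity hσ.ne', mul_one, gaussSmooth]
  rw [hcentre]
  calc |∫ t, (f (x + t) - f x) * gaussDensity d σ t|
      ≤ ∫ t, |(f (x + t) - f x) * gaussDensity d σ t| := abs_integral_le_integral_abs
    _ ≤ ∫ t, K * (‖t‖ * gaussDensity d σ t) :=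
        integral_mono_of_nonneg (ae_of_all _ fun _ => abs_nonneg _)
          ((integrable_norm_mul_gaussDensity hσ.ne').const_mul K) (ae_of_all _ fun t => by
            dsimp only
            rw [abs_mul, abs_of_nonneg (gaussDensity_nonneg t), ← mul_assoc]
            refine mul_le_mul_of_nonneg_right ?_ (gaussDensity_nonneg t)
            simpa [Real.dist_eq, dist_eq_norm] using hf.dist_le_mul (x + t) x)
    _ ≤ K * (σ * √d) := by
        rw [integral_const_mul]
        gcongr
        exact integral_norm_mul_gaussDensity_le hd hσ

lemma lintegral_enorm_gaussSmooth_le (hσ : σ ≠ 0) (hm : Measurable h) :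
    ∫⁻ x, ‖gaussSmooth d σ h x‖ₑ ≤ ∫⁻ x, ‖h x‖ₑ :=
  calc ∫⁻ x, ‖gaussSmooth d σ h x‖ₑ
      ≤ ∫⁻ x, ∫⁻ t, ‖h (x + t)‖ₑ * ‖gaussDensity d σ t‖ₑ :=
        lintegral_mono fun x =>
          (enorm_integral_le_lintegral_enorm _).trans_eq (by simp_rw [enorm_mul])
    _ = ∫⁻ t, ∫⁻ x, ‖h (x + t)‖ₑ * ‖gaussDensity d σ t‖ₑ :=
        lintegral_lintegral_swap ((hm.comp measurable_add).enorm.mul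
          (continuous_gaussDensity.measurable.comp measurable_snd).enorm).aemeasurable
    _ = ∫⁻ t, (∫⁻ x, ‖h x‖ₑ) * ‖gaussDensity d σ t‖ₑ := by
        refine lintegral_congr fun t => ?_
        rw [lintegral_mul_const' _ _ enorm_ne_top,
          lintegral_add_right_eq_self (fun x => ‖h x‖ₑ) t]
    _ = ∫⁻ x, ‖h x‖ₑ := by
        rw [lintegral_const_mul _ continuous_gaussDensity.measurable.enorm,
          lintegral_enorm_gaussDensity hσ, mul_one]

lemma setIntegral_gaussSmooth_le (hσ : σ ≠ 0) (hm : Measurable h) (hi : Integrable h)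
    (s : Set (EuclideanSpace ℝ (Fin d))) :
    ∫ x in s, gaussSmooth d σ h x ≤ ∫ x, |h x| :=
  calc ∫ x in s, gaussSmooth d σ h x ≤ ‖∫ x in s, gaussSmooth d σ h x‖ := Real.le_norm_self _
    _ ≤ (∫⁻ x, ‖h x‖ₑ).toReal := by
        rw [← toReal_enorm]
        exact ENNReal.toReal_mono hi.2.ne ((enorm_integral_le_lintegral_enorm _).trans
          ((setLIntegral_le_lintegral _ _).trans (lintegral_enorm_gaussSmooth_le hσ hm)))
    _ = ∫ x, |h x| := (integral_norm_eq_lintegral_enorm hi.1).symm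

lemma abs_gaussSmooth_sub_le_gaussSmooth_abs_sub_add (hd : 0 < d) (hσ : 0 < σ)
    (hm : Measurable h) (hb : ∀ z, |h z| ≤ C) {K : NNReal} (hf : LipschitzWith K f)
    (hfb : ∀ z, |f z| ≤ C) (x : EuclideanSpace ℝ (Fin d)) :
    |gaussSmooth d σ h x - f x| ≤ gaussSmooth d σ (fun u => |h u - f u|) x + K * (σ * √d) :=
  calc |gaussSmooth d σ h x - f x|
      ≤ |gaussSmooth d σ h x - gaussSmooth d σ f x| + |gaussSmooth d σ f x - f x| :=
        abs_sub_le _ _ _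
    _ ≤ gaussSmooth d σ (fun u => |h u - f u|) x + K * (σ * √d) := by
        rw [gaussSmooth_sub hσ.ne' hm hb hf.continuous.measurable hfb]
        exact add_le_add (abs_gaussSmooth_le_gaussSmooth_abs x)
          (abs_gaussSmooth_sub_self_le hd hσ hf hfb x)

theorem setIntegral_abs_gaussSmooth_sub_le (hd : 0 < d) (hσ : 0 < σ)
    {U : Set (EuclideanSpace ℝ (Fin d))} (hU : volume U ≠ ⊤) (hm : Measurable h)
    (hb : ∀ z, |h z| ≤ C) {K : NNReal} (hf : LipschitzWith K f) (hfb : ∀ z, |f z| ≤ C)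
    (hhf : ∀ z ∉ U, h z = f z) :
    ∫ x in U, |gaussSmooth d σ h x - f x|
      ≤ (∫ x in U, |h x - f x|) + (volume U).toReal * (K * (σ * √d)) := by
  set H := fun u => |h u - f u|
  set c := (K : ℝ) * (σ * √d)
  have hHm : Measurable H := (hm.sub hf.continuous.measurable).abs
  have hHb : ∀ u, |H u| ≤ C + C := fun u => by
    rw [abs_abs]; exact (abs_sub _ _).trans (add_le_add (hb u) (hfb u))
  have hH_compl : ∀ u ∉ U, H u = 0 := fun u hu => by simp [H, hhf u hu]
  have hHi : Integrable H :=
    (integrableOn_iff_integrable_of_support_subset fun u hu => not_imp_comm.1 (hH_compl u) hu).1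
      (Measure.integrableOn_of_bounded hU hHm.aestronglyMeasurable (ae_of_all _ hHb))
  have hHs : IntegrableOn (gaussSmooth d σ H) U :=
    Measure.integrableOn_of_bounded hU (stronglyMeasurable_gaussSmooth hHm).aestronglyMeasurable
      (ae_of_all _ (abs_gaussSmooth_le hσ.ne' hHb))
  have hc : IntegrableOn (fun _ => c) U := integrableOn_const hU
  calc ∫ x in U, |gaussSmooth d σ h x - f x| ≤ ∫ x in U, (gaussSmooth d σ H x + c) :=
        integral_mono_of_nonneg (ae_of_all _ fun _ => abs_nonneg _) (hHs.add hc)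
          (ae_of_all _ (abs_gaussSmooth_sub_le_gaussSmooth_abs_sub_add hd hσ hm hb hf hfb))
    _ = (∫ x in U, gaussSmooth d σ H x) + (volume U).toReal * c := by
        rw [integral_add hHs hc, setIntegral_const, smul_eq_mul, measureReal_def]
    _ ≤ (∫ x, |H x|) + (volume U).toReal * c := by
        gcongr; exact setIntegral_gaussSmooth_le hσ.ne' hHm hHi U
    _ = (∫ x in U, H x) + (volume U).toReal * c := by
        rw [setIntegral_eq_integral_of_forall_compl_eq_zero hH_compl]
        simp only [H, abs_abs]

theorem l1Dist_gaussSmooth_le (hd : 0 < d) (hσ : 0 < σ) {U : Set (EuclideanSpace ℝ (Fin d))}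
    (hU : volume U ≠ ⊤) (hm : Measurable h) (hb : ∀ z, |h z| ≤ C) {K : NNReal}
    (hf : LipschitzWith K f) (hfb : ∀ z, |f z| ≤ C) (hhf : ∀ z ∉ U, h z = f z) :
    l1Dist d U (gaussSmooth d σ h) f ≤ l1Dist d U h f + K * (σ * √d) := by
  set V := (volume U).toReal
  set c := (K : ℝ) * (σ * √d)
  unfold l1Dist
  calc 1 / V * ∫ x in U, |gaussSmooth d σ h x - f x|
      ≤ 1 / V * ((∫ x in U, |h x - f x|) + V * c) := by
        gcongr; exact setIntegral_abs_gaussSmooth_sub_le hd hσ hU hm hb hf hfb hhf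
    _ = 1 / V * (∫ x in U, |h x - f x|) + V / V * c := by ring
    _ ≤ 1 / V * (∫ x in U, |h x - f x|) + c := by
        gcongr
        exact mul_le_of_le_one_left (by positivity) (div_self_le_one _)

end Smoothing

theorem gaussSmooth_immunization_general
    (d : ℕ) (hd : 0 < d) (L : ℝ) (hL : 0 < L)
    (U : Set (EuclideanSpace ℝ (Fin d)))
    (hUfin : volume U < ⊤)
    (fstar : EuclideanSpace ℝ (Fin d) → ℝ)
    (hfrange : ∀ x, fstar x ∈ Set.Icc (-1 : ℝ) 1)
    (hfLip : ∀ x y, |fstar x - fstar y| ≤ L * ‖x - y‖)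
    (h : EuclideanSpace ℝ (Fin d) → ℝ)
    (hmeas : Measurable h) (hbd : ∀ x, |h x| ≤ 1)
    (hvanish : ∀ x, x ∉ U → h x = 0 ∧ fstar x = 0) :
    ∀ σ : ℝ, 0 < σ →
      (∀ x y : EuclideanSpace ℝ (Fin d),
        |gaussSmooth d σ h x - gaussSmooth d σ h y| ≤
          (Real.exp 1 * Real.sqrt 2 / σ) * ‖x - y‖) ∧
      l1Dist d U (gaussSmooth d σ h) fstar ≤
        l1Dist d U h fstar + 2 * L * σ * Real.sqrt d := by
  intro σ hσ
  have hfstar : LipschitzWith L.toNNReal fstar := .of_dist_le_mul fun x y => by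
    rw [Real.coe_toNNReal _ hL.le, Real.dist_eq, dist_eq_norm]
    exact hfLip x y
  have hone : 1 ≤ rexp 1 * √2 :=
    one_le_mul_of_one_le_of_one_le (one_le_exp zero_le_one) (one_le_sqrt.2 one_le_two)
  refine ⟨fun x y => ?_, ?_⟩
  · calc |gaussSmooth d σ h x - gaussSmooth d σ h y| ≤ 1 / σ * ‖x - y‖ :=
          abs_gaussSmooth_sub_le hd hσ hmeas hbd x y
      _ ≤ rexp 1 * √2 / σ * ‖x - y‖ := by gcongr
  · calc l1Dist d U (gaussSmooth d σ h) fstar ≤ l1Dist d U h fstar + L.toNNReal * (σ * √d) :=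
          l1Dist_gaussSmooth_le hd hσ hUfin.ne hmeas hbd hfstar (fun x => abs_le.2 (hfrange x))
            fun x hx => (hvanish x hx).1.trans (hvanish x hx).2.symm
      _ ≤ l1Dist d U h fstar + 2 * L * σ * √d := by
          rw [Real.coe_toNNReal _ hL.le]
          nlinarith [mul_nonneg (mul_pos hL hσ).le (sqrt_nonneg (d : ℝ))]

/-- Under the evaluation-time immunization hypotheses, for every `σ > 0`
the Gaussian smoothing `h̃` is simultaneously `(e√2/σ)`-robust and a good learning:
`ℓ₁(h̃, f*) ≤ ℓ₁(h, f*) + 2Lσ√d`. -/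
theorem gaussSmooth_immunization
    (d : ℕ) (hd : 0 < d) (L : ℝ) (hL : 0 < L)
    (U : Set (EuclideanSpace ℝ (Fin d))) (hU : MeasurableSet U)
    (hUpos : 0 < volume U) (hUfin : volume U < ⊤)
    (fstar : EuclideanSpace ℝ (Fin d) → ℝ)
    (hfrange : ∀ x, fstar x ∈ Set.Icc (-1 : ℝ) 1)
    (hfLip : ∀ x y, |fstar x - fstar y| ≤ L * ‖x - y‖)
    (h : EuclideanSpace ℝ (Fin d) → ℝ)
    (hmeas : Measurable h) (hbd : ∀ x, |h x| ≤ 1)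
    (hvanish : ∀ x, x ∉ U → h x = 0 ∧ fstar x = 0) :
    ∀ σ : ℝ, 0 < σ →
      (∀ x y : EuclideanSpace ℝ (Fin d),
        |gaussSmooth d σ h x - gaussSmooth d σ h y| ≤
          (Real.exp 1 * Real.sqrt 2 / σ) * ‖x - y‖) ∧
      l1Dist d U (gaussSmooth d σ h) fstar ≤
        l1Dist d U h fstar + 2 * L * σ * Real.sqrt d :=
  gaussSmooth_immunization_general d hd L hL U hUfin fstar hfrange hfLip h hmeas hbd hvanish
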